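/- Assume each Ĵ_i is bounded from below and define the ideal point y^id ∈ ℝ^k by y^id_i := inf_{u ∈ U_ad} Ĵ_i(u). Fix d̃ ∈ ℝ^k with d̃ > 0, set ỹ^id := y^id − d̃, let D_i := {y ∈ ℝ^k : y ≥ ỹ^id and y_i = ỹ^id_i}, D := ⋃_{i=1}^k D_i, and for y ∈ ℝ^k set t^D(y) := min_{1≤i≤k} (y_i − ỹ^id_i)/r_i. Then the set {z ∈ D : ∃ ū ∈ U_ad Pareto optimal and ∃ t ∈ ℝ with z = Ĵ(ū) − t r} equals the set {Ĵ(ū) − t^D(Ĵ(ū)) r : ū ∈ U_ad Pareto optimal}. -/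

import Mathlib

open Finset

section RayHittingTime

variable {ι : Type*} [Fintype ι] {a y r : ι → ℝ}

theorem forall_le_sub_mul_iff_le_inf' (hι : (univ : Finset ι).Nonempty) (hr : ∀ i, 0 < r i)
    (t : ℝ) :
    (∀ i, a i ≤ y i - t * r i) ↔ t ≤ univ.inf' hι fun j => (y j - a j) / r j := by
  simp only [le_inf'_iff, mem_univ, true_imp_iff, le_div_iff₀ (hr _)]
  exact forall_congr' fun i => by constructor <;> intro h <;> linarith

theorem sub_mul_mem_orthant_boundary_iff (hι : (univ : Finset ι).Nonempty)
    (hr : ∀ i, 0 < r i) (t : ℝ) :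
    ((∀ i, a i ≤ y i - t * r i) ∧ ∃ i, y i - t * r i = a i) ↔
      t = univ.inf' hι fun j => (y j - a j) / r j := by
  constructor
  · rintro ⟨hle, i, hi⟩
    refine le_antisymm ((forall_le_sub_mul_iff_le_inf' hι hr t).1 hle) ?_
    calc univ.inf' hι (fun j => (y j - a j) / r j) ≤ (y i - a i) / r i := inf'_le _ (mem_univ i)
      _ = t := by rw [div_eq_iff (hr i).ne']; linarith
  · rintro rfl
    refine ⟨(forall_le_sub_mul_iff_le_inf' hι hr _).2 le_rfl, ?_⟩
    obtain ⟨j, -, hj⟩ := exists_mem_eq_inf' hι fun j => (y j - a j) / r j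
    exact ⟨j, by rw [hj, div_mul_cancel₀ _ (hr j).ne']; ring⟩

end RayHittingTime

/-- **Characterization of the Pareto sufficient reference set `𝒵^D_opt`.**
Assume each `J_i` is bounded from below on `Uad` and let `yid` be the ideal point,
`yid_i = inf_{u ∈ Uad} J_i(u)`.  Fix `dt > 0`, let the shifted ideal point be
`yid − dt`, let `D = ⋃_i D_i` with
`D_i = {y : y ≥ yid − dt, y_i = yid_i − dt_i}`, and for `y ∈ ℝ^k` set
`t^D(y) = min_i (y_i − (yid_i − dt_i))/r_i`.  Then
`{z ∈ D : ∃ Pareto optimal ubar ∈ Uad, ∃ t ∈ ℝ, z = J(ubar) − t r}`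
equals `{J(ubar) − t^D(J(ubar)) r : ubar ∈ Uad Pareto optimal}`. -/
theorem reference_set_characterization
    {U : Type*}
    {k : ℕ} (hk : 2 ≤ k) (Uad : Set U)
    (J : U → Fin k → ℝ)
    (r : Fin k → ℝ) (hr : ∀ i, 0 < r i)
    (dt : Fin k → ℝ)
    (yid : Fin k → ℝ) :
    {zz : Fin k → ℝ |
        ((∀ i, yid i - dt i ≤ zz i) ∧ ∃ i, zz i = yid i - dt i) ∧
        ∃ ubar ∈ Uad, (∀ ut ∈ Uad, ¬ (J ut ≤ J ubar ∧ J ut ≠ J ubar)) ∧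
          ∃ t : ℝ, zz = fun i => J ubar i - t * r i} =
      {w : Fin k → ℝ | ∃ ubar ∈ Uad,
        (∀ ut ∈ Uad, ¬ (J ut ≤ J ubar ∧ J ut ≠ J ubar)) ∧
        w = fun i => J ubar i -
          (Finset.univ.inf' (Finset.univ_nonempty_iff.mpr ⟨⟨0, by omega⟩⟩)
            fun j => (J ubar j - (yid j - dt j)) / r j) * r i} := by
  have hι : (univ : Finset (Fin k)).Nonempty := univ_nonempty_iff.mpr ⟨⟨0, by omega⟩⟩
  ext z
  constructor
  · rintro ⟨hD, u, hu, hpar, t, rfl⟩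
    refine ⟨u, hu, hpar, ?_⟩
    rw [← (sub_mul_mem_orthant_boundary_iff (a := fun i => yid i - dt i) hι hr t).1 hD]
  · rintro ⟨u, hu, hpar, rfl⟩
    exact ⟨(sub_mul_mem_orthant_boundary_iff (a := fun i => yid i - dt i) hι hr _).2 rfl,
      u, hu, hpar, _, rfl⟩
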